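/- Let (ξ_i)_{i=1}^n be a martingale difference sequence adapted to a filtration (F_i), with |ξ_i| ≤ B almost surely and E[ξ_i² | F_{i−1}] ≤ σ² almost surely. Then for all λ ∈ (0, 1/B), E[exp(λ Σ_{i=1}^n ξ_i)] ≤ exp( n λ² σ² / (1 − λB) ). -/

import Mathlib

/-!
Conditionally on `F i`, the increment `ξ (i + 1)` is centred and `|λ ξ (i + 1)| ≤ λB < 1`, so
`exp (λ ξ) ≤ 1 + λ ξ + λ² ξ² / (1 - λB)` yields `E[exp (λ ξ (i + 1)) | F i] ≤ 1 + λ²σ² / (1 - λB)`,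
which is at most `exp (λ²σ² / (1 - λB))`. Peeling off one factor of `exp (λ S_n) = ∏ exp (λ ξ (i + 1))`
at a time with the tower property gives the bound.
-/

open MeasureTheory
open scoped BigOperators

namespace Real

lemma exp_mul_le_one_add_add_sq_div {x B lam : ℝ} (hx : |x| ≤ B) (hlam : 0 < lam)
    (hlamB : lam * B < 1) :
    exp (lam * x) ≤ 1 + lam * x + lam ^ 2 / (1 - lam * B) * x ^ 2 := by
  have hB : 0 ≤ B := (abs_nonneg x).trans hx
  have hy : |lam * x| ≤ 1 := by
    rw [abs_mul, abs_of_pos hlam]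
    nlinarith
  have hquad : exp (lam * x) ≤ 1 + lam * x + (lam * x) ^ 2 := by
    linarith [(abs_le.mp (abs_exp_sub_one_sub_id_le hy)).2]
  have hsq : (lam * x) ^ 2 ≤ lam ^ 2 / (1 - lam * B) * x ^ 2 := by
    rw [mul_pow, div_mul_eq_mul_div, le_div_iff₀ (by linarith)]
    nlinarith [sq_nonneg (lam * x), mul_nonneg hlam.le hB]
  linarith

end Real

section CondExp

variable {Ω : Type*} {m m0 : MeasurableSpace Ω} {μ : Measure Ω} [IsFiniteMeasure μ]

lemma condExp_exp_mul_le_of_condExp_eq_zero (hm : m ≤ m0) {X : Ω → ℝ}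
    (hX : AEStronglyMeasurable X μ) {B σ lam : ℝ} (hlam : 0 < lam) (hlamB : lam * B < 1)
    (hbdd : ∀ᵐ ω ∂μ, |X ω| ≤ B) (hmean : μ[X|m] =ᵐ[μ] 0)
    (hvar : ∀ᵐ ω ∂μ, (μ[fun ω => X ω ^ 2|m]) ω ≤ σ ^ 2) :
    μ[fun ω => Real.exp (lam * X ω)|m] ≤ᵐ[μ]
      fun _ => Real.exp (lam ^ 2 * σ ^ 2 / (1 - lam * B)) := by
  set a := lam ^ 2 / (1 - lam * B)
  have ha : 0 ≤ a := div_nonneg (sq_nonneg _) (by linarith)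
  have hXint : Integrable X μ :=
    .of_bound hX B (by filter_upwards [hbdd] with ω h using h)
  have hX2int : Integrable (fun ω => X ω ^ 2) μ :=
    .of_bound (hX.pow 2) (B ^ 2) (by
      filter_upwards [hbdd] with ω h
      simpa [abs_pow] using pow_le_pow_left₀ (abs_nonneg _) h 2)
  have hexpint : Integrable (fun ω => Real.exp (lam * X ω)) μ :=
    .of_bound (Real.continuous_exp.comp_aestronglyMeasurable (hX.const_mul lam))
      (Real.exp (lam * B)) (by
        filter_upwards [hbdd] with ω h
        rw [Real.norm_eq_abs, Real.abs_exp, Real.exp_le_exp]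
        exact mul_le_mul_of_nonneg_left ((le_abs_self _).trans h) hlam.le)
  have hlin : Integrable ((fun _ => (1 : ℝ)) + lam • X) μ :=
    (integrable_const 1).add (hXint.smul lam)
  have hdom : (fun ω => Real.exp (lam * X ω)) ≤ᵐ[μ]
      (fun _ => (1 : ℝ)) + lam • X + a • fun ω => X ω ^ 2 := by
    filter_upwards [hbdd] with ω h
    exact Real.exp_mul_le_one_add_add_sq_div h hlam hlamB
  filter_upwards [condExp_mono (m := m) hexpint (hlin.add (hX2int.smul a)) hdom,
    condExp_add hlin (hX2int.smul a) m, condExp_add (integrable_const 1) (hXint.smul lam) m,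
    condExp_smul (m := m) (μ := μ) lam X, condExp_smul (m := m) (μ := μ) a (fun ω => X ω ^ 2),
    hmean, hvar] with ω hmono hadd hadd' hsmul hsmul' hmeanω hvarω
  simp only [Pi.add_apply, Pi.smul_apply, smul_eq_mul, Pi.zero_apply,
    condExp_const hm (1 : ℝ)] at hadd hadd' hsmul hsmul' hmeanω
  rw [hadd, hadd', hsmul, hsmul', hmeanω] at hmono
  calc _ ≤ 1 + a * σ ^ 2 := by linarith [mul_le_mul_of_nonneg_left hvarω ha]
    _ ≤ Real.exp (a * σ ^ 2) := by linarith [Real.add_one_le_exp (a * σ ^ 2)]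
    _ = _ := by rw [mul_div_right_comm]

lemma integral_mul_le_of_condExp_le (hm : m ≤ m0) {f g : Ω → ℝ} {R C : ℝ}
    (hf : StronglyMeasurable[m] f) (hf0 : 0 ≤ f) (hfR : ∀ᵐ ω ∂μ, f ω ≤ R)
    (hg : Integrable g μ) (hgC : μ[g|m] ≤ᵐ[μ] fun _ => C) :
    ∫ ω, f ω * g ω ∂μ ≤ C * ∫ ω, f ω ∂μ := by
  have hfbdd : ∀ᵐ ω ∂μ, ‖f ω‖ ≤ R := by
    filter_upwards [hfR] with ω h
    rwa [Real.norm_of_nonneg (hf0 ω)]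
  have hfm : AEStronglyMeasurable f μ := (hf.mono hm).aestronglyMeasurable
  calc ∫ ω, f ω * g ω ∂μ = ∫ ω, (μ[f * g|m]) ω ∂μ := (integral_condExp hm).symm
    _ = ∫ ω, f ω * (μ[g|m]) ω ∂μ :=
      integral_congr_ae (condExp_mul_of_stronglyMeasurable_left hf (hg.bdd_mul hfm hfbdd) hg)
    _ ≤ ∫ ω, f ω * C ∂μ := by
      refine integral_mono_ae (integrable_condExp.bdd_mul hfm hfbdd)
        ((Integrable.of_bound hfm R hfbdd).mul_const C) ?_
      filter_upwards [hgC] with ω h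
      exact mul_le_mul_of_nonneg_left h (hf0 ω)
    _ = C * ∫ ω, f ω ∂μ := by rw [integral_mul_const, mul_comm]

end CondExp

lemma integral_prod_le_pow_of_condExp_le {Ω : Type*} {m0 : MeasurableSpace Ω} {μ : Measure Ω}
    [IsProbabilityMeasure μ] (F : Filtration ℕ m0) {Y : ℕ → Ω → ℝ} {R C : ℝ}
    (hY : ∀ i, StronglyMeasurable[F i] (Y i)) (hY0 : ∀ i, 0 ≤ Y i)
    (hYR : ∀ i, ∀ᵐ ω ∂μ, Y (i + 1) ω ≤ R) (hC0 : 0 ≤ C)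
    (hYC : ∀ i, μ[Y (i + 1)|F i] ≤ᵐ[μ] fun _ => C) (n : ℕ) :
    ∫ ω, ∏ i ∈ Finset.range n, Y (i + 1) ω ∂μ ≤ C ^ n := by
  induction n with
  | zero => simp
  | succ n ih =>
    have hprod_meas : StronglyMeasurable[F n] fun ω => ∏ i ∈ Finset.range n, Y (i + 1) ω := by
      exact Finset.stronglyMeasurable_fun_prod _ fun i hi =>
        (hY (i + 1)).mono (F.mono (Finset.mem_range.mp hi))
    have hprod_bdd : ∀ᵐ ω ∂μ, ∏ i ∈ Finset.range n, Y (i + 1) ω ≤ R ^ n := by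
      filter_upwards [ae_all_iff.mpr hYR] with ω h
      simpa using Finset.prod_le_prod (s := Finset.range n) (fun i _ => hY0 (i + 1) ω) fun i _ => h i
    have hYint : Integrable (Y (n + 1)) μ :=
      .of_bound ((hY (n + 1)).mono (F.le _)).aestronglyMeasurable R (by
        filter_upwards [hYR n] with ω h
        rwa [Real.norm_of_nonneg (hY0 _ ω)])
    simp only [Finset.prod_range_succ]
    calc _ ≤ C * ∫ ω, ∏ i ∈ Finset.range n, Y (i + 1) ω ∂μ :=
          integral_mul_le_of_condExp_le (F.le n) hprod_meas
            (fun ω => Finset.prod_nonneg fun i _ => hY0 (i + 1) ω) hprod_bdd hYint (hYC n)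
      _ ≤ C ^ (n + 1) := by rw [pow_succ']; exact mul_le_mul_of_nonneg_left ih hC0

theorem stmt11_general {Ω : Type*} {m0 : MeasurableSpace Ω} (μ : Measure Ω)
    [IsProbabilityMeasure μ] (F : Filtration ℕ m0)
    (n : ℕ) (ξ : ℕ → Ω → ℝ) (B σ : ℝ)
    (hadp : ∀ i, StronglyMeasurable[F i] (ξ i))
    (hmd : ∀ i, μ[ξ (i + 1)|F i] =ᵐ[μ] 0)
    (hbdd : ∀ i, ∀ᵐ ω ∂μ, |ξ (i + 1) ω| ≤ B)
    (hvar : ∀ i, ∀ᵐ ω ∂μ, (μ[fun ω => (ξ (i + 1) ω) ^ 2|F i]) ω ≤ σ ^ 2)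
    (lam : ℝ) (hlam0 : 0 < lam) (hlam : lam < 1 / B) :
    ∫ ω, Real.exp (lam * ∑ i ∈ Finset.range n, ξ (i + 1) ω) ∂μ
      ≤ Real.exp (n * lam ^ 2 * σ ^ 2 / (1 - lam * B)) := by
  have hB : 0 < B := one_div_pos.mp (hlam0.trans hlam)
  have hlamB : lam * B < 1 := (lt_div_iff₀ hB).mp hlam
  have hexp_meas : ∀ i, StronglyMeasurable[F i] fun ω => Real.exp (lam * ξ i ω) := fun i =>
    Real.continuous_exp.comp_stronglyMeasurable ((hadp i).const_mul lam)
  have hexp_bdd : ∀ i, ∀ᵐ ω ∂μ, Real.exp (lam * ξ (i + 1) ω) ≤ Real.exp (lam * B) := fun i => by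
    filter_upwards [hbdd i] with ω h
    exact Real.exp_le_exp.mpr (mul_le_mul_of_nonneg_left ((le_abs_self _).trans h) hlam0.le)
  have hcond := fun i => condExp_exp_mul_le_of_condExp_eq_zero (F.le i)
    ((hadp (i + 1)).mono (F.le _)).aestronglyMeasurable hlam0 hlamB (hbdd i) (hmd i) (hvar i)
  have key := integral_prod_le_pow_of_condExp_le F hexp_meas (fun i ω => (Real.exp_pos _).le)
    hexp_bdd (Real.exp_pos _).le hcond n
  simp only [Finset.mul_sum, Real.exp_sum]
  rwa [mul_assoc, mul_div_assoc, Real.exp_nat_mul]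

theorem stmt11 {Ω : Type*} {m0 : MeasurableSpace Ω} (μ : Measure Ω)
    [IsProbabilityMeasure μ] (F : Filtration ℕ m0)
    (n : ℕ) (ξ : ℕ → Ω → ℝ) (B σ : ℝ) (hB : 0 < B)
    (hadp : ∀ i, StronglyMeasurable[F i] (ξ i))
    (hmd : ∀ i, μ[ξ (i + 1)|F i] =ᵐ[μ] 0)
    (hbdd : ∀ i, ∀ᵐ ω ∂μ, |ξ (i + 1) ω| ≤ B)
    (hvar : ∀ i, ∀ᵐ ω ∂μ, (μ[fun ω => (ξ (i + 1) ω) ^ 2|F i]) ω ≤ σ ^ 2)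
    (lam : ℝ) (hlam0 : 0 < lam) (hlam : lam < 1 / B) :
    ∫ ω, Real.exp (lam * ∑ i ∈ Finset.range n, ξ (i + 1) ω) ∂μ
      ≤ Real.exp (n * lam ^ 2 * σ ^ 2 / (1 - lam * B)) :=
  stmt11_general μ F n ξ B σ hadp hmd hbdd hvar lam hlam0 hlam
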